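/- Let Π = (R, CR) be a finite ground CR-program over a set of atoms At, and let τ(Π) be its weak-constraint translation using fresh atoms appl_1, …, appl_N. Then a consistent set A of literals over At is an answer set of Π if and only if there exists an answer set S of the weak-constraint program τ(Π) such that A is exactly the set of literals in S not formed from any of the fresh atoms appl_1, …, appl_N. -/
import Mathlib


/-- A literal is an atom or its classical negation. -/
inductive Lit (α : Type) where
  | pos : α → Lit α
  | neg : α → Lit α
deriving DecidableEq

/-- The atom a literal is formed from. -/
def Lit.atom {α : Type} : Lit α → α
  | .pos a => a
  | .neg a => a

/-- A set of literals is consistent if it contains no complementary pair. -/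
def Consistent {α : Type} (S : Set (Lit α)) : Prop :=
  ∀ a : α, ¬ (Lit.pos a ∈ S ∧ Lit.neg a ∈ S)

/-- A ground rule  l₀ ∨ … ∨ l_m ← l_{m+1}, …, l_k, not l_{k+1}, …, not l_n. -/
structure Rule (α : Type) where
  head : List (Lit α)
  pbody : List (Lit α)
  nbody : List (Lit α)
deriving DecidableEq

/-- `S` satisfies a rule. -/
def Satisfies {α : Type} (S : Set (Lit α)) (r : Rule α) : Prop :=
  ((∀ l ∈ r.pbody, l ∈ S) ∧ (∀ l ∈ r.nbody, l ∉ S)) → ∃ l ∈ r.head, l ∈ S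

/-- The reduct of a ground program relative to `S`. -/
def reduct {α : Type} (P : Set (Rule α)) (S : Set (Lit α)) : Set (Rule α) :=
  {r' | ∃ r ∈ P, (∀ l ∈ r.nbody, l ∉ S) ∧ r' = ⟨r.head, r.pbody, []⟩}

/-- `S` satisfies all rules of `P`. -/
def SatAll {α : Type} (P : Set (Rule α)) (S : Set (Lit α)) : Prop :=
  ∀ r ∈ P, Satisfies S r

/-- `S` is an answer set of the ground program `P`: `S` is consistent and minimal
among consistent sets of literals satisfying all rules of the reduct `P^S`. -/
def IsAnswerSet {α : Type} (P : Set (Rule α)) (S : Set (Lit α)) : Prop :=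
  Consistent S ∧ SatAll (reduct P S) S ∧
    ∀ T, Consistent T → SatAll (reduct P S) T → T ⊆ S → T = S

/-- A cr-rule  l₀ ←⁺ l_1, …, l_k, not l_{k+1}, …, not l_n, with a single literal head. -/
structure CrRule (α : Type) where
  head : Lit α
  pbody : List (Lit α)
  nbody : List (Lit α)
deriving DecidableEq

/-- α(r): the regular rule obtained from a cr-rule by replacing ←⁺ with ←. -/
def CrRule.alpha {α : Type} (r : CrRule α) : Rule α :=
  ⟨[r.head], r.pbody, r.nbody⟩

/-- `X` is an abductive support of the CR-program `(R, CRs)`. -/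
def IsAbductiveSupport {α : Type} [DecidableEq α]
    (R : Finset (Rule α)) (CRs X : Finset (CrRule α)) : Prop :=
  X ⊆ CRs ∧ (∃ S, IsAnswerSet ((R : Set (Rule α)) ∪ ↑(X.image CrRule.alpha)) S) ∧
    ∀ Y ⊆ CRs, (∃ S, IsAnswerSet ((R : Set (Rule α)) ∪ ↑(Y.image CrRule.alpha)) S) → X.card ≤ Y.card

/-- `A` is an answer set of the CR-program `(R, CRs)`. -/
def IsCrAnswerSet {α : Type} [DecidableEq α]
    (R : Finset (Rule α)) (CRs : Finset (CrRule α)) (A : Set (Lit α)) : Prop :=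
  ∃ X, IsAbductiveSupport R CRs X ∧ IsAnswerSet ((R : Set (Rule α)) ∪ ↑(X.image CrRule.alpha)) A

/-- A weak constraint  :~ l_1, …, l_k, not l_{k+1}, …, not l_n. -/
structure WeakConstraint (α : Type) where
  pbody : List (Lit α)
  nbody : List (Lit α)
deriving DecidableEq

/-- `S` violates a weak constraint. -/
def ViolatesWC {α : Type} (S : Set (Lit α)) (w : WeakConstraint α) : Prop :=
  (∀ l ∈ w.pbody, l ∈ S) ∧ (∀ l ∈ w.nbody, l ∉ S)

/-- The number of weak constraints of `W` violated by `S`. -/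
noncomputable def violatedCount {α : Type} (W : Finset (WeakConstraint α))
    (S : Set (Lit α)) : ℕ :=
  {w : WeakConstraint α | w ∈ W ∧ ViolatesWC S w}.ncard

/-- `S` is an answer set of the weak-constraint program `(P, W)`. -/
def IsWcAnswerSet {α : Type} (P : Set (Rule α)) (W : Finset (WeakConstraint α))
    (S : Set (Lit α)) : Prop :=
  IsAnswerSet P S ∧ ∀ T, IsAnswerSet P T → violatedCount W S ≤ violatedCount W T

section Translation

variable {α : Type} [DecidableEq α] {N : ℕ}

/-- Atom `a` occurs in the rule `r`. -/
def OccursInRule (a : α) (r : Rule α) : Prop :=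
  ∃ l ∈ r.head ++ r.pbody ++ r.nbody, l.atom = a

/-- Atom `a` occurs in the cr-rule `r`. -/
def OccursInCrRule (a : α) (r : CrRule α) : Prop :=
  ∃ l ∈ r.head :: (r.pbody ++ r.nbody), l.atom = a

/-- The atoms `appl i` are distinct and fresh: they do not occur in the
CR-program `(R, cr 1, …, cr N)`. -/
def FreshAppl (R : Finset (Rule α)) (cr : Fin N → CrRule α) (appl : Fin N → α) : Prop :=
  Function.Injective appl ∧
    ∀ i : Fin N, (∀ r ∈ R, ¬ OccursInRule (appl i) r) ∧
      (∀ j : Fin N, ¬ OccursInCrRule (appl i) (cr j))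

/-- The rule  appl_i ∨ ¬appl_i ← B_i. -/
def choiceRule (cr : Fin N → CrRule α) (appl : Fin N → α) (i : Fin N) : Rule α :=
  ⟨[Lit.pos (appl i), Lit.neg (appl i)], (cr i).pbody, (cr i).nbody⟩

/-- The rule  h_i ← appl_i, B_i. -/
def applRule (cr : Fin N → CrRule α) (appl : Fin N → α) (i : Fin N) : Rule α :=
  ⟨[(cr i).head], Lit.pos (appl i) :: (cr i).pbody, (cr i).nbody⟩

/-- The hard part of the translation τ(Π). -/
def tauHard (R : Finset (Rule α)) (cr : Fin N → CrRule α) (appl : Fin N → α) :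
    Set (Rule α) :=
  ↑R ∪ Set.range (choiceRule cr appl) ∪ Set.range (applRule cr appl)

/-- The i-th weak constraint  :~ appl_i, B_i  of the translation τ(Π). -/
def wcOf (cr : Fin N → CrRule α) (appl : Fin N → α) (i : Fin N) : WeakConstraint α :=
  ⟨Lit.pos (appl i) :: (cr i).pbody, (cr i).nbody⟩

/-- The set of weak constraints of the translation τ(Π). -/
def tauWeak (cr : Fin N → CrRule α) (appl : Fin N → α) : Finset (WeakConstraint α) :=
  Finset.image (wcOf cr appl) Finset.univ

/-- The literals of `S` not formed from any of the fresh atoms `appl i`. -/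
def restrictAway (appl : Fin N → α) (S : Set (Lit α)) : Set (Lit α) :=
  {l ∈ S | ∀ i : Fin N, l.atom ≠ appl i}

end Translation
section AuxProof
variable {α : Type} [DecidableEq α] {N : ℕ}

lemma consistent_mono {S T : Set (Lit α)} (h : T ⊆ S) (hS : Consistent S) : Consistent T :=
  fun a ha => hS a ⟨h ha.1, h ha.2⟩

lemma mem_restrictAway {appl : Fin N → α} {S : Set (Lit α)} {l : Lit α} :
    l ∈ restrictAway appl S ↔ l ∈ S ∧ ∀ i, l.atom ≠ appl i := Iff.rfl

lemma fresh_R_lit {R : Finset (Rule α)} {cr : Fin N → CrRule α} {appl : Fin N → α}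
    (hf : FreshAppl R cr appl) {r : Rule α} (hr : r ∈ R) {l : Lit α}
    (hl : l ∈ r.head ∨ l ∈ r.pbody ∨ l ∈ r.nbody) (i : Fin N) : l.atom ≠ appl i := by
  intro he
  exact (hf.2 i).1 r hr ⟨l, by simp only [List.mem_append]; tauto, he⟩

lemma fresh_cr_lit {R : Finset (Rule α)} {cr : Fin N → CrRule α} {appl : Fin N → α}
    (hf : FreshAppl R cr appl) (j : Fin N) {l : Lit α}
    (hl : l = (cr j).head ∨ l ∈ (cr j).pbody ∨ l ∈ (cr j).nbody) (i : Fin N) : l.atom ≠ appl i := by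
  intro he
  exact (hf.2 i).2 j ⟨l, by simp only [List.mem_cons, List.mem_append]; tauto, he⟩

lemma mem_tauHard {R : Finset (Rule α)} {cr : Fin N → CrRule α} {appl : Fin N → α} {r : Rule α} :
    r ∈ tauHard R cr appl ↔
      r ∈ R ∨ (∃ i, r = choiceRule cr appl i) ∨ (∃ i, r = applRule cr appl i) := by
  simp only [tauHard, Set.mem_union, Set.mem_range, Finset.mem_coe, eq_comm, or_assoc]

lemma mem_P0 {R : Finset (Rule α)} {cr : Fin N → CrRule α} {I : Finset (Fin N)} {r : Rule α} :
    r ∈ (↑R ∪ ↑((I.image cr).image CrRule.alpha) : Set (Rule α)) ↔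
      r ∈ R ∨ ∃ i ∈ I, r = (cr i).alpha := by
  simp only [Set.mem_union, Finset.mem_coe, Finset.coe_image, Set.mem_image, Finset.mem_image]
  constructor
  · rintro (h | ⟨s, hs, rfl⟩)
    · exact Or.inl h
    · obtain ⟨i, hi, rfl⟩ := hs
      exact Or.inr ⟨i, hi, rfl⟩
  · rintro (h | ⟨i, hi, rfl⟩)
    · exact Or.inl h
    · exact Or.inr ⟨cr i, ⟨i, hi, rfl⟩, rfl⟩

lemma pure_of_answerSet {P : Set (Rule α)} {appl : Fin N → α} {A : Set (Lit α)}
    (hP : ∀ r ∈ P, ∀ l, (l ∈ r.head ∨ l ∈ r.pbody ∨ l ∈ r.nbody) → ∀ i, l.atom ≠ appl i)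
    (hA : IsAnswerSet P A) : ∀ l ∈ A, ∀ i, l.atom ≠ appl i := by
  have hsub : restrictAway appl A ⊆ A := fun l hl => hl.1
  have hmin := hA.2.2 (restrictAway appl A) (consistent_mono hsub hA.1) ?_ hsub
  · intro l hl
    rw [← hmin] at hl
    exact hl.2
  · rintro r' ⟨r, hrP, hnb, rfl⟩ ⟨hp, -⟩
    obtain ⟨l, hlh, hlA⟩ := hA.2.1 _ ⟨r, hrP, hnb, rfl⟩
      ⟨fun l hl => (hp l hl).1, by simp⟩
    exact ⟨l, hlh, hlA, hP r hrP l (Or.inl hlh)⟩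

lemma answerSet_of_vacuous {P P' : Set (Rule α)} {A : Set (Lit α)}
    (hsub : P' ⊆ P)
    (hvac : ∀ r ∈ P, r ∉ P' → (∀ l ∈ r.nbody, l ∉ A) → ¬ (∀ l ∈ r.pbody, l ∈ A))
    (hA : IsAnswerSet P A) : IsAnswerSet P' A := by
  refine ⟨hA.1, ?_, ?_⟩
  · rintro r' ⟨r, hrP, hnb, rfl⟩
    exact hA.2.1 _ ⟨r, hsub hrP, hnb, rfl⟩
  · intro T hTc hTs hTA
    refine hA.2.2 T hTc ?_ hTA
    rintro r' ⟨r, hrP, hnb, rfl⟩ ⟨hp, -⟩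
    by_cases hr' : r ∈ P'
    · exact hTs _ ⟨r, hr', hnb, rfl⟩ ⟨hp, by simp⟩
    · exact absurd (fun l hl => hTA (hp l hl)) (hvac r hrP hr' hnb)

lemma count_eq {cr : Fin N → CrRule α} {appl : Fin N → α} (hinj : Function.Injective appl)
    {S : Set (Lit α)} {I : Finset (Fin N)}
    (h : ∀ i, ViolatesWC S (wcOf cr appl i) ↔ i ∈ I) :
    violatedCount (tauWeak cr appl) S = I.card := by
  have hwinj : Function.Injective (wcOf cr appl) := by
    intro i j hij
    have h1 := congrArg WeakConstraint.pbody hij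
    simp only [wcOf, List.cons.injEq, Lit.pos.injEq] at h1
    exact hinj h1.1
  have hset : {w : WeakConstraint α | w ∈ tauWeak cr appl ∧ ViolatesWC S w}
      = wcOf cr appl '' ↑I := by
    ext w
    simp only [tauWeak, Finset.mem_image, Finset.mem_univ, true_and, Set.mem_image,
      Finset.mem_coe, Set.mem_setOf_eq]
    constructor
    · rintro ⟨⟨i, rfl⟩, hv⟩
      exact ⟨i, (h i).1 hv, rfl⟩
    · rintro ⟨i, hi, rfl⟩
      exact ⟨⟨i, rfl⟩, (h i).2 hi⟩
  rw [violatedCount, hset, Set.ncard_image_of_injective _ hwinj, Set.ncard_coe_finset]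

end AuxProof
section AuxProof2
set_option linter.unusedSectionVars false
variable {α : Type} [DecidableEq α] {N : ℕ}

lemma lemA {R : Finset (Rule α)} {cr : Fin N → CrRule α} {appl : Fin N → α}
    (hf : FreshAppl R cr appl) (I : Finset (Fin N)) {A : Set (Lit α)}
    (hpure : ∀ l ∈ A, ∀ i, l.atom ≠ appl i)
    (hbody : ∀ i ∈ I, (∀ x ∈ (cr i).pbody, x ∈ A) ∧ (∀ x ∈ (cr i).nbody, x ∉ A))
    (hAns : IsAnswerSet (↑R ∪ ↑((I.image cr).image CrRule.alpha)) A) :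
    ∃ S, IsAnswerSet (tauHard R cr appl) S ∧ restrictAway appl S = A ∧
      (∀ i, ViolatesWC S (wcOf cr appl i) ↔ i ∈ I) := by
  have hinj : Function.Injective appl := hf.1
  set BodyOKA : Fin N → Prop :=
    fun i => (∀ x ∈ (cr i).pbody, x ∈ A) ∧ (∀ x ∈ (cr i).nbody, x ∉ A) with hB
  set S : Set (Lit α) :=
    A ∪ {l | ∃ i ∈ I, l = Lit.pos (appl i)} ∪
      {l | ∃ i, i ∉ I ∧ BodyOKA i ∧ l = Lit.neg (appl i)} with hSdef
  have hAS : A ⊆ S := fun l hl => Or.inl (Or.inl hl)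
  have memS : ∀ l, l ∈ S ↔ l ∈ A ∨ (∃ i ∈ I, l = Lit.pos (appl i)) ∨
      (∃ i, i ∉ I ∧ BodyOKA i ∧ l = Lit.neg (appl i)) := by
    intro l
    simp only [hSdef, Set.mem_union, Set.mem_setOf_eq, or_assoc]
  have hpos : ∀ i, Lit.pos (appl i) ∈ S ↔ i ∈ I := by
    intro i
    rw [memS]
    constructor
    · rintro (h | ⟨j, hj, he⟩ | ⟨j, _, _, he⟩)
      · exact absurd rfl (hpure _ h i)
      · rw [Lit.pos.injEq] at he
        rwa [hinj he]
      · exact absurd he (by simp)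
    · intro h; exact Or.inr (Or.inl ⟨i, h, rfl⟩)
  have hneg : ∀ i, Lit.neg (appl i) ∈ S ↔ (i ∉ I ∧ BodyOKA i) := by
    intro i
    rw [memS]
    constructor
    · rintro (h | ⟨j, hj, he⟩ | ⟨j, hj1, hj2, he⟩)
      · exact absurd rfl (hpure _ h i)
      · exact absurd he (by simp)
      · rw [Lit.neg.injEq] at he
        rw [hinj he]; exact ⟨hj1, hj2⟩
    · intro h; exact Or.inr (Or.inr ⟨i, h.1, h.2, rfl⟩)
  have htrans : ∀ l, (∀ i, Lit.atom l ≠ appl i) → (l ∈ S ↔ l ∈ A) := by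
    intro l hl
    rw [memS]
    constructor
    · rintro (h | ⟨j, hj, rfl⟩ | ⟨j, hj1, hj2, rfl⟩)
      · exact h
      · exact absurd rfl (hl j)
      · exact absurd rfl (hl j)
    · exact Or.inl
  have hrest : restrictAway appl S = A := by
    ext l
    rw [mem_restrictAway]
    constructor
    · rintro ⟨hlS, hl⟩
      exact (htrans l hl).1 hlS
    · intro h
      exact ⟨hAS h, hpure l h⟩
  -- body transfer for cr-rules
  have hbodyT : ∀ i : Fin N, ((∀ x ∈ (cr i).pbody, x ∈ S) ∧ (∀ x ∈ (cr i).nbody, x ∉ S))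
      ↔ BodyOKA i := by
    intro i
    constructor
    · rintro ⟨hp, hn⟩
      constructor
      · intro x hx
        exact (htrans x (fresh_cr_lit hf i (Or.inr (Or.inl hx)))).1 (hp x hx)
      · intro x hx hxA
        exact hn x hx (hAS hxA)
    · rintro ⟨hp, hn⟩
      constructor
      · intro x hx
        exact hAS (hp x hx)
      · intro x hx hxS
        exact hn x hx ((htrans x (fresh_cr_lit hf i (Or.inr (Or.inr hx)))).1 hxS)
  -- consistency of S
  have hScons : Consistent S := by
    intro a ⟨hpa, hna⟩
    rcases (memS _).1 hpa with h1 | ⟨i, hi, he⟩ | ⟨i, _, _, he⟩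
    · rcases (memS _).1 hna with h2 | ⟨j, hj, he⟩ | ⟨j, _, _, he⟩
      · exact hAns.1 a ⟨h1, h2⟩
      · exact absurd he (by simp)
      · rw [Lit.neg.injEq] at he
        exact hpure _ h1 j (by simp [Lit.atom, he])
    · rw [Lit.pos.injEq] at he
      subst he
      rcases (memS _).1 hna with h2 | ⟨j, hj, he2⟩ | ⟨j, hj1, hj2, he2⟩
      · exact hpure _ h2 i rfl
      · exact absurd he2 (by simp)
      · rw [Lit.neg.injEq] at he2
        exact hj1 (hinj he2 ▸ hi)
    · exact absurd he (by simp)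
  refine ⟨S, ⟨hScons, ?_, ?_⟩, hrest, ?_⟩
  · -- SatAll (reduct tauHard S) S
    rintro r' ⟨r, hrP, hnb, rfl⟩ ⟨hp, -⟩
    rcases mem_tauHard.1 hrP with hr | ⟨i, rfl⟩ | ⟨i, rfl⟩
    · -- rule from R
      have hred : (⟨r.head, r.pbody, []⟩ : Rule α) ∈
          reduct (↑R ∪ ↑((I.image cr).image CrRule.alpha)) A :=
        ⟨r, mem_P0.2 (Or.inl hr), fun l hl hlA => hnb l hl (hAS hlA), rfl⟩
      obtain ⟨l, hlh, hlA⟩ := hAns.2.1 _ hred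
        ⟨fun l hl => (htrans l (fresh_R_lit hf hr (Or.inr (Or.inl hl)))).1 (hp l hl), by simp⟩
      exact ⟨l, hlh, hAS hlA⟩
    · -- choice rule
      have hcrb : BodyOKA i := (hbodyT i).1 ⟨hp, hnb⟩
      by_cases hi : i ∈ I
      · exact ⟨Lit.pos (appl i), by simp [choiceRule], (hpos i).2 hi⟩
      · exact ⟨Lit.neg (appl i), by simp [choiceRule], (hneg i).2 ⟨hi, hcrb⟩⟩
    · -- appl rule
      have hpa : Lit.pos (appl i) ∈ S := hp _ (by simp [applRule])
      have hi : i ∈ I := (hpos i).1 hpa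
      have hpb : ∀ x ∈ (cr i).pbody, x ∈ A := by
        intro x hx
        exact (htrans x (fresh_cr_lit hf i (Or.inr (Or.inl hx)))).1
          (hp x (by simp [applRule, hx]))
      have hred : (⟨(CrRule.alpha (cr i)).head, (CrRule.alpha (cr i)).pbody, []⟩ : Rule α) ∈
          reduct (↑R ∪ ↑((I.image cr).image CrRule.alpha)) A := by
        refine ⟨_, mem_P0.2 (Or.inr ⟨i, hi, rfl⟩), ?_, rfl⟩
        exact (hbody i hi).2
      obtain ⟨l, hlh, hlA⟩ := hAns.2.1 _ hred ⟨hpb, by simp⟩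
      simp only [CrRule.alpha, List.mem_singleton] at hlh
      subst hlh
      exact ⟨(cr i).head, by simp [applRule], hAS hlA⟩
  · -- minimality
    intro T hTc hTs hTS
    have hA'sub : restrictAway appl T ⊆ A := by
      intro l hl
      exact (htrans l hl.2).1 (hTS hl.1)
    have hA' : restrictAway appl T = A := by
      refine hAns.2.2 _ (consistent_mono (fun l hl => hl.1) hTc) ?_ hA'sub
      rintro r' ⟨r, hrP, hnb, rfl⟩ ⟨hp, -⟩
      rcases mem_P0.1 hrP with hr | ⟨i, hi, rfl⟩
      · -- from R
        have hnbS : ∀ l ∈ r.nbody, l ∉ S := by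
          intro l hl hlS
          exact hnb l hl ((htrans l (fresh_R_lit hf hr (Or.inr (Or.inr hl)))).1 hlS)
        obtain ⟨l, hlh, hlT⟩ := hTs _ ⟨r, mem_tauHard.2 (Or.inl hr), hnbS, rfl⟩
          ⟨fun l hl => (hp l hl).1, by simp⟩
        exact ⟨l, hlh, hlT, fresh_R_lit hf hr (Or.inl hlh)⟩
      · -- from alpha (cr i), i ∈ I
        have hcrb : BodyOKA i := hbody i hi
        have hnbS : ∀ l ∈ (cr i).nbody, l ∉ S := by
          intro l hl hlS
          exact hcrb.2 l hl ((htrans l (fresh_cr_lit hf i (Or.inr (Or.inr hl)))).1 hlS)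
        have hpT : ∀ x ∈ (cr i).pbody, x ∈ T := by
          intro x hx
          have := hp x (by simpa [CrRule.alpha] using hx)
          exact this.1
        -- choice rule gives pos or neg in T
        obtain ⟨l, hlh, hlT⟩ := hTs _ ⟨choiceRule cr appl i, mem_tauHard.2 (Or.inr (Or.inl ⟨i, rfl⟩)),
          hnbS, rfl⟩ ⟨hpT, by simp⟩
        simp only [choiceRule, List.mem_cons, List.mem_singleton, List.not_mem_nil, or_false] at hlh
        have hposT : Lit.pos (appl i) ∈ T := by
          rcases hlh with rfl | rfl
          · exact hlT
          · exact absurd ((hneg i).1 (hTS hlT)).1 (by exact fun h => h hi)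
        -- appl rule gives head in T
        obtain ⟨l, hlh, hlT2⟩ := hTs _ ⟨applRule cr appl i, mem_tauHard.2 (Or.inr (Or.inr ⟨i, rfl⟩)),
          hnbS, rfl⟩ ⟨by
            intro x hx
            simp only [applRule, List.mem_cons] at hx
            rcases hx with rfl | hx
            · exact hposT
            · exact hpT x hx, by simp⟩
        simp only [applRule, List.mem_singleton] at hlh
        subst hlh
        refine ⟨(cr i).head, by simp [CrRule.alpha], hlT2, fresh_cr_lit hf i (Or.inl rfl)⟩
    -- now S ⊆ T
    have hAT : A ⊆ T := by
      intro l hl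
      rw [← hA'] at hl
      exact hl.1
    have hST : S ⊆ T := by
      intro l hlS
      rcases (memS l).1 hlS with h | ⟨i, hi, rfl⟩ | ⟨i, hi1, hi2, rfl⟩
      · exact hAT h
      · -- pos appl i, i ∈ I
        have hcrb : BodyOKA i := hbody i hi
        have hnbS : ∀ l ∈ (cr i).nbody, l ∉ S := fun x hx => ((hbodyT i).2 hcrb).2 x hx
        obtain ⟨l, hlh, hlT⟩ := hTs _ ⟨choiceRule cr appl i, mem_tauHard.2 (Or.inr (Or.inl ⟨i, rfl⟩)),
          hnbS, rfl⟩ ⟨fun x hx => hAT (hcrb.1 x hx), by simp⟩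
        simp only [choiceRule, List.mem_cons, List.mem_singleton, List.not_mem_nil, or_false] at hlh
        rcases hlh with rfl | rfl
        · exact hlT
        · exact absurd ((hneg i).1 (hTS hlT)).1 (by exact fun h => h hi)
      · -- neg appl i
        have hnbS : ∀ l ∈ (cr i).nbody, l ∉ S := fun x hx => ((hbodyT i).2 hi2).2 x hx
        obtain ⟨l, hlh, hlT⟩ := hTs _ ⟨choiceRule cr appl i, mem_tauHard.2 (Or.inr (Or.inl ⟨i, rfl⟩)),
          hnbS, rfl⟩ ⟨fun x hx => hAT (hi2.1 x hx), by simp⟩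
        simp only [choiceRule, List.mem_cons, List.mem_singleton, List.not_mem_nil, or_false] at hlh
        rcases hlh with rfl | rfl
        · exact absurd ((hpos i).1 (hTS hlT)) hi1
        · exact hlT
    exact Set.Subset.antisymm hTS hST
  · -- violation characterization
    intro i
    constructor
    · rintro ⟨hp, hn⟩
      exact (hpos i).1 (hp _ (by simp [wcOf]))
    · intro hi
      refine ⟨?_, ?_⟩
      · intro x hx
        simp only [wcOf, List.mem_cons] at hx
        rcases hx with rfl | hx
        · exact (hpos i).2 hi
        · exact hAS ((hbody i hi).1 x hx)
      · intro x hx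
        exact ((hbodyT i).2 (hbody i hi)).2 x hx
end AuxProof2
section AuxProof3
set_option linter.unusedSectionVars false
variable {α : Type} [DecidableEq α] {N : ℕ}

lemma lemB {R : Finset (Rule α)} {cr : Fin N → CrRule α} {appl : Fin N → α}
    (hf : FreshAppl R cr appl) {S : Set (Lit α)}
    (hS : IsAnswerSet (tauHard R cr appl) S) :
    ∃ I : Finset (Fin N),
      IsAnswerSet (↑R ∪ ↑((I.image cr).image CrRule.alpha)) (restrictAway appl S) ∧
      (∀ i, ViolatesWC S (wcOf cr appl i) ↔ i ∈ I) := by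
  classical
  set A : Set (Lit α) := restrictAway appl S with hAdef
  have hAS : A ⊆ S := fun l hl => hl.1
  have htrans : ∀ l, (∀ i, Lit.atom l ≠ appl i) → (l ∈ S ↔ l ∈ A) :=
    fun l hl => ⟨fun h => ⟨h, hl⟩, fun h => h.1⟩
  set I : Finset (Fin N) := Finset.univ.filter (fun i => Lit.pos (appl i) ∈ S) with hIdef
  have hmemI : ∀ i, i ∈ I ↔ Lit.pos (appl i) ∈ S := by
    intro i; simp [hIdef]
  -- claim (a): i ∈ I → body of cr i satisfied
  have hbody : ∀ i ∈ I, (∀ x ∈ (cr i).pbody, x ∈ A) ∧ (∀ x ∈ (cr i).nbody, x ∉ A) := by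
    intro i hi
    have hiS : Lit.pos (appl i) ∈ S := (hmemI i).1 hi
    have hbS : (∀ x ∈ (cr i).pbody, x ∈ S) ∧ (∀ x ∈ (cr i).nbody, x ∉ S) := by
      by_contra hcon
      set T : Set (Lit α) := S \ {Lit.pos (appl i)} with hTdef
      have hTS : T ⊆ S := Set.diff_subset
      have hTsat : SatAll (reduct (tauHard R cr appl) S) T := by
        rintro r' ⟨r, hrP, hnb, rfl⟩ ⟨hp, -⟩
        have hpS : ∀ l ∈ r.pbody, l ∈ S := fun l hl => hTS (hp l hl)
        obtain ⟨l, hlh, hlS⟩ := hS.2.1 _ ⟨r, hrP, hnb, rfl⟩ ⟨hpS, by simp⟩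
        rcases mem_tauHard.1 hrP with hr | ⟨j, rfl⟩ | ⟨j, rfl⟩
        · exact ⟨l, hlh, hlS, fun he => fresh_R_lit hf hr (Or.inl hlh) i (by rw [Set.mem_singleton_iff.1 he]; rfl)⟩
        · -- choice rule j
          simp only [choiceRule, List.mem_cons, List.mem_singleton, List.not_mem_nil,
            or_false] at hlh
          rcases hlh with rfl | rfl
          · by_cases hji : Lit.pos (appl j) = Lit.pos (appl i)
            · -- then j-th body is satisfied by S, and j = i: contradiction with hcon
              have hji' : appl j = appl i := by injection hji
              have hj : j = i := hf.1 hji'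
              subst hj
              exact absurd ⟨fun x hx => hTS (hp x hx), hnb⟩ hcon
            · exact ⟨_, by simp [choiceRule], hlS, hji⟩
          · exact ⟨_, by simp [choiceRule], hlS, by simp⟩
        · -- appl rule j: head is (cr j).head, a fresh-free literal
          simp only [applRule, List.mem_singleton] at hlh
          subst hlh
          exact ⟨_, by simp [applRule], hlS,
            fun he => fresh_cr_lit hf j (Or.inl rfl) i (by rw [Set.mem_singleton_iff.1 he]; rfl)⟩
      have := hS.2.2 T (consistent_mono hTS hS.1) hTsat hTS
      have : Lit.pos (appl i) ∈ T := this ▸ hiS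
      exact this.2 rfl
    refine ⟨?_, ?_⟩
    · intro x hx
      exact (htrans x (fresh_cr_lit hf i (Or.inr (Or.inl hx)))).1 (hbS.1 x hx)
    · intro x hx hxA
      exact hbS.2 x hx (hAS hxA)
  refine ⟨I, ⟨consistent_mono hAS hS.1, ?_, ?_⟩, ?_⟩
  · -- SatAll (reduct P0 A) A
    rintro r' ⟨r, hrP, hnb, rfl⟩ ⟨hp, -⟩
    rcases mem_P0.1 hrP with hr | ⟨i, hi, rfl⟩
    · have hnbS : ∀ l ∈ r.nbody, l ∉ S := by
        intro l hl hlS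
        exact hnb l hl ((htrans l (fresh_R_lit hf hr (Or.inr (Or.inr hl)))).1 hlS)
      obtain ⟨l, hlh, hlS⟩ := hS.2.1 _ ⟨r, mem_tauHard.2 (Or.inl hr), hnbS, rfl⟩
        ⟨fun l hl => hAS (hp l hl), by simp⟩
      exact ⟨l, hlh, (htrans l (fresh_R_lit hf hr (Or.inl hlh))).1 hlS⟩
    · have hnbS : ∀ l ∈ (cr i).nbody, l ∉ S := by
        intro l hl hlS
        exact (hbody i hi).2 l hl ((htrans l (fresh_cr_lit hf i (Or.inr (Or.inr hl)))).1 hlS)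
      obtain ⟨l, hlh, hlS⟩ := hS.2.1 _
        ⟨applRule cr appl i, mem_tauHard.2 (Or.inr (Or.inr ⟨i, rfl⟩)), hnbS, rfl⟩
        ⟨by
          intro x hx
          simp only [applRule, List.mem_cons] at hx
          rcases hx with rfl | hx
          · exact (hmemI i).1 hi
          · exact hAS (hp x (by simpa [CrRule.alpha] using hx)), by simp⟩
      simp only [applRule, List.mem_singleton] at hlh
      subst hlh
      exact ⟨(cr i).head, by simp [CrRule.alpha],
        (htrans _ (fresh_cr_lit hf i (Or.inl rfl))).1 hlS⟩
  · -- minimality for A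
    intro T hTc hTs hTA
    set T' : Set (Lit α) := T ∪ (S \ A) with hT'def
    have hT'S : T' ⊆ S := by
      rintro l (hl | hl)
      · exact hAS (hTA hl)
      · exact hl.1
    have hT'mem : ∀ l, (∀ i, Lit.atom l ≠ appl i) → l ∈ T' → l ∈ T := by
      rintro l hfr (hl | hl)
      · exact hl
      · exact absurd ⟨hl.1, hfr⟩ hl.2
    have hT'sat : SatAll (reduct (tauHard R cr appl) S) T' := by
      rintro r' ⟨r, hrP, hnb, rfl⟩ ⟨hp, -⟩
      rcases mem_tauHard.1 hrP with hr | ⟨i, rfl⟩ | ⟨i, rfl⟩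
      · -- rule from R
        have hpT : ∀ l ∈ r.pbody, l ∈ T :=
          fun l hl => hT'mem l (fresh_R_lit hf hr (Or.inr (Or.inl hl))) (hp l hl)
        have hnbA : ∀ l ∈ r.nbody, l ∉ A := fun l hl hlA => hnb l hl (hAS hlA)
        obtain ⟨l, hlh, hlT⟩ := hTs _ ⟨r, mem_P0.2 (Or.inl hr), hnbA, rfl⟩ ⟨hpT, by simp⟩
        exact ⟨l, hlh, Or.inl hlT⟩
      · -- choice rule i
        have hpS : ∀ x ∈ (cr i).pbody, x ∈ S := fun x hx => hT'S (hp x hx)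
        obtain ⟨l, hlh, hlS⟩ := hS.2.1 _
          ⟨choiceRule cr appl i, mem_tauHard.2 (Or.inr (Or.inl ⟨i, rfl⟩)), hnb, rfl⟩
          ⟨hpS, by simp⟩
        refine ⟨l, hlh, Or.inr ⟨hlS, ?_⟩⟩
        simp only [choiceRule, List.mem_cons, List.mem_singleton, List.not_mem_nil,
          or_false] at hlh
        rintro ⟨hlS2, hfr⟩
        rcases hlh with rfl | rfl
        · exact hfr i rfl
        · exact hfr i rfl
      · -- appl rule i
        have hposT' : Lit.pos (appl i) ∈ T' := hp _ (by simp [applRule])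
        have hposS : Lit.pos (appl i) ∈ S := hT'S hposT'
        have hiI : i ∈ I := (hmemI i).2 hposS
        have hpT : ∀ x ∈ (cr i).pbody, x ∈ T := by
          intro x hx
          exact hT'mem x (fresh_cr_lit hf i (Or.inr (Or.inl hx)))
            (hp x (by simp [applRule, hx]))
        obtain ⟨l, hlh, hlT⟩ := hTs _ ⟨CrRule.alpha (cr i), mem_P0.2 (Or.inr ⟨i, hiI, rfl⟩),
          (hbody i hiI).2, rfl⟩ ⟨by simpa [CrRule.alpha] using hpT, by simp⟩
        simp only [CrRule.alpha, List.mem_singleton] at hlh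
        subst hlh
        exact ⟨(cr i).head, by simp [applRule], Or.inl hlT⟩
    have hT'eq : T' = S := hS.2.2 T' (consistent_mono hT'S hS.1) hT'sat hT'S
    -- conclude T = A
    ext l
    constructor
    · exact fun h => hTA h
    · intro hlA
      have hlT' : l ∈ T' := hT'eq ▸ (hAS hlA)
      rcases hlT' with h | h
      · exact h
      · exact absurd hlA h.2
  · -- violation characterization
    intro i
    constructor
    · rintro ⟨hp, hn⟩
      exact (hmemI i).2 (hp _ (by simp [wcOf]))
    · intro hi
      refine ⟨?_, ?_⟩
      · intro x hx
        simp only [wcOf, List.mem_cons] at hx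
        rcases hx with rfl | hx
        · exact (hmemI i).1 hi
        · exact hAS ((hbody i hi).1 x hx)
      · intro x hx hxS
        exact (hbody i hi).2 x hx ((htrans x (fresh_cr_lit hf i (Or.inr (Or.inr hx)))).1 hxS)

end AuxProof3
section AuxProof4
set_option linter.unusedSectionVars false
variable {α : Type} [DecidableEq α] {N : ℕ}

lemma key_reduce {R : Finset (Rule α)} {cr : Fin N → CrRule α} {appl : Fin N → α}
    (hf : FreshAppl R cr appl)
    (Y : Finset (CrRule α)) (hY : Y ⊆ Finset.image cr Finset.univ)
    {B : Set (Lit α)} (hB : IsAnswerSet (↑R ∪ ↑(Y.image CrRule.alpha)) B) :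
    ∃ (J : Finset (Fin N)) (S : Set (Lit α)),
      Finset.image cr J ⊆ Y ∧
      IsAnswerSet ((↑R : Set (Rule α)) ∪ ↑((J.image cr).image CrRule.alpha)) B ∧
      IsAnswerSet (tauHard R cr appl) S ∧
      restrictAway appl S = B ∧
      violatedCount (tauWeak cr appl) S = J.card := by
  classical
  have hcrOfY : ∀ s ∈ Y, ∃ j : Fin N, s = cr j := by
    intro s hs
    obtain ⟨j, -, hj⟩ := Finset.mem_image.1 (hY hs)
    exact ⟨j, hj.symm⟩
  have hpure : ∀ l ∈ B, ∀ i, l.atom ≠ appl i := by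
    refine pure_of_answerSet ?_ hB
    intro r hr l hl i
    rcases (Set.mem_union _ _ _).1 hr with h | h
    · exact fresh_R_lit hf (Finset.mem_coe.1 h) hl i
    · obtain ⟨s, hs, rfl⟩ := Finset.mem_image.1 (Finset.mem_coe.1 h)
      obtain ⟨j, rfl⟩ := hcrOfY s hs
      simp only [CrRule.alpha, List.mem_singleton] at hl
      rcases hl with rfl | hl | hl
      · exact fresh_cr_lit hf j (Or.inl rfl) i
      · exact fresh_cr_lit hf j (Or.inr (Or.inl hl)) i
      · exact fresh_cr_lit hf j (Or.inr (Or.inr hl)) i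
  set Y' : Finset (CrRule α) :=
    Y.filter (fun s => (∀ x ∈ s.pbody, x ∈ B) ∧ (∀ x ∈ s.nbody, x ∉ B)) with hY'def
  have hB' : IsAnswerSet ((↑R : Set (Rule α)) ∪ ↑(Y'.image CrRule.alpha)) B := by
    refine answerSet_of_vacuous ?_ ?_ hB
    · exact Set.union_subset_union_right _
        (Finset.coe_subset.2 (Finset.image_subset_image (Finset.filter_subset _ _)))
    · intro r hr hr' hnb hpb
      rcases (Set.mem_union _ _ _).1 hr with h | h
      · exact hr' (Set.mem_union_left _ h)
      · obtain ⟨s, hs, rfl⟩ := Finset.mem_image.1 (Finset.mem_coe.1 h)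
        have hsY' : s ∈ Y' := by
          rw [hY'def, Finset.mem_filter]
          exact ⟨hs, hpb, hnb⟩
        exact hr' (Set.mem_union_right _ (Finset.mem_coe.2 (Finset.mem_image_of_mem _ hsY')))
  set J : Finset (Fin N) := Finset.univ.filter (fun i => cr i ∈ Y') with hJdef
  have hJY' : J.image cr = Y' := by
    ext s
    simp only [Finset.mem_image, hJdef, Finset.mem_filter, Finset.mem_univ, true_and]
    constructor
    · rintro ⟨j, hj, rfl⟩
      exact hj
    · intro hs
      obtain ⟨j, rfl⟩ := hcrOfY s (Finset.filter_subset _ _ hs)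
      exact ⟨j, hs, rfl⟩
  rw [← hJY'] at hB'
  have hbody : ∀ i ∈ J, (∀ x ∈ (cr i).pbody, x ∈ B) ∧ (∀ x ∈ (cr i).nbody, x ∉ B) := by
    intro i hi
    have : cr i ∈ Y' := by
      rw [hJdef, Finset.mem_filter] at hi
      exact hi.2
    rw [hY'def, Finset.mem_filter] at this
    exact this.2
  obtain ⟨S, hSans, hrest, hviol⟩ := lemA hf J hpure hbody hB'
  exact ⟨J, S, by rw [hJY']; exact Finset.filter_subset _ _, hB', hSans, hrest,
    count_eq hf.1 hviol⟩

end AuxProof4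

/-- A consistent set `A` of literals over `At` is an answer set of the
finite ground CR-program Π = (R, CR) iff there is an answer set `S` of the
weak-constraint translation τ(Π) such that `A` consists exactly of the literals of `S`
not formed from any of the fresh atoms `appl 1, …, appl N`. -/
theorem crProgram_answerSet_iff_translation
    {α : Type} [DecidableEq α] [Countable α] {N : ℕ}
    (R : Finset (Rule α)) (cr : Fin N → CrRule α) (hcr : Function.Injective cr)
    (appl : Fin N → α) (hfresh : FreshAppl R cr appl)
    (A : Set (Lit α)) (hA : Consistent A) :
    IsCrAnswerSet R (Finset.image cr Finset.univ) A ↔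
      ∃ S, IsWcAnswerSet (tauHard R cr appl) (tauWeak cr appl) S ∧
        A = restrictAway appl S := by
  classical
  constructor
  · rintro ⟨X, ⟨hXsub, hXex, hXmin⟩, hAX⟩
    obtain ⟨J, S, hJY, hBans, hSans, hrest, hcount⟩ := key_reduce hfresh X hXsub hAX
    have hJc : (J.image cr).card = J.card := Finset.card_image_of_injective _ hcr
    have h1 : X.card ≤ (J.image cr).card := hXmin _ (hJY.trans hXsub) ⟨A, hBans⟩
    have h1' : (J.image cr).card ≤ X.card := Finset.card_le_card hJY
    refine ⟨S, ⟨hSans, ?_⟩, hrest.symm⟩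
    intro T hT
    obtain ⟨IT, hTans, hTviol⟩ := lemB hfresh hT
    have hcT : violatedCount (tauWeak cr appl) T = IT.card := count_eq hfresh.1 hTviol
    have h2 : X.card ≤ (IT.image cr).card :=
      hXmin _ (Finset.image_subset_image (Finset.subset_univ _)) ⟨_, hTans⟩
    have h3 : (IT.image cr).card = IT.card := Finset.card_image_of_injective _ hcr
    omega
  · rintro ⟨S, ⟨hSans, hSmin⟩, hAeq⟩
    obtain ⟨I, hIans, hIviol⟩ := lemB hfresh hSans
    rw [← hAeq] at hIans
    have hcS : violatedCount (tauWeak cr appl) S = I.card := count_eq hfresh.1 hIviol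
    have hIc : (I.image cr).card = I.card := Finset.card_image_of_injective _ hcr
    refine ⟨I.image cr, ⟨Finset.image_subset_image (Finset.subset_univ _), ⟨A, hIans⟩, ?_⟩, hIans⟩
    rintro Y hY ⟨B, hB⟩
    obtain ⟨J, S', hJY, hBans, hS'ans, hrest', hcount'⟩ := key_reduce hfresh Y hY hB
    have h1 : violatedCount (tauWeak cr appl) S ≤ violatedCount (tauWeak cr appl) S' :=
      hSmin S' hS'ans
    have h2 : (J.image cr).card = J.card := Finset.card_image_of_injective _ hcr
    have h3 : (J.image cr).card ≤ Y.card := Finset.card_le_card hJY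
    omega
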